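/- Let G be the Taylor graph of a Cohen–Macaulay monomial ideal of codimension 2 with a linear resolution. Then G is a chordal graph, and any two distinct maximal cliques of G have at most one vertex in common. -/
import Mathlib


open MvPolynomial

namespace CMCodim2

noncomputable section

/-- The total degree of an exponent vector (of a monomial). -/
def mdeg {σ : Type*} (a : σ →₀ ℕ) : ℕ := a.sum fun _ e => e

/-- The height (codimension) of an ideal: the infimum of the heights of the
prime ideals containing it. -/
def idealHeight {R : Type*} [CommRing R] (I : Ideal R) : ℕ∞ :=
  ⨅ (p : PrimeSpectrum R) (_ : I ≤ p.asIdeal), Order.height p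

/-- An ideal `I` of a polynomial ring is a Cohen–Macaulay ideal of codimension `2`
iff it has height `2` and `R/I` has a free resolution
`0 → R^a → R^b → R → R/I → 0` of length `2` (Auslander–Buchsbaum). -/
def IsCMCodim2 {R : Type*} [CommRing R] (I : Ideal R) : Prop :=
  idealHeight I = 2 ∧
    ∃ (a b : ℕ) (f : (Fin a → R) →ₗ[R] (Fin b → R)) (g : (Fin b → R) →ₗ[R] R),
      Function.Injective f ∧ LinearMap.range f = LinearMap.ker g ∧
        LinearMap.range g = I

/-- The map `φ₁ : S^{m+1} → S`, `e_i ↦ u_i`, where `u_i` is the (monic) monomial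
with exponent vector `d i`. -/
def phi (K : Type*) [Field K] {σ : Type*} (m : ℕ) (d : Fin (m + 1) → (σ →₀ ℕ)) :
    (Fin (m + 1) → MvPolynomial σ K) →ₗ[MvPolynomial σ K] MvPolynomial σ K where
  toFun v := ∑ i, v i * monomial (d i) 1
  map_add' x y := by simp [add_mul, Finset.sum_add_distrib]
  map_smul' c x := by simp [Finset.mul_sum, mul_assoc]

/-- The Taylor relation `r_{ij} = u_{ji} e_j - u_{ij} e_i ∈ S^{m+1}` of the monomials
`u_i, u_j` with exponent vectors `d i, d j`; here `u_{ji} = u_i / gcd(u_i,u_j)`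
has exponent vector `d i - d j` (truncated subtraction). -/
def taylorRel (K : Type*) [Field K] {σ : Type*} (m : ℕ) (d : Fin (m + 1) → (σ →₀ ℕ))
    (i j : Fin (m + 1)) : Fin (m + 1) → MvPolynomial σ K := fun k =>
  if k = j then monomial (d i - d j) 1
  else if k = i then -(monomial (d j - d i) 1) else 0

/-- `t` lists the `m` (unordered) pairs of indices of Taylor relations forming the rows of
a Hilbert–Burch matrix of the ideal generated by the `m+1` monomials with exponent
vectors `d i`: the corresponding Taylor relations generate (hence, being `m` elements
generating the free rank-`m` module, minimally generate) the first syzygy module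
`U = ker φ₁`. -/
def IsHB (K : Type*) [Field K] {σ : Type*} (m : ℕ) (d : Fin (m + 1) → (σ →₀ ℕ))
    (t : Fin m → Fin (m + 1) × Fin (m + 1)) : Prop :=
  (∀ k, (t k).1 ≠ (t k).2) ∧
    Submodule.span (MvPolynomial σ K)
        (Set.range fun k => taylorRel K m d (t k).1 (t k).2) =
      LinearMap.ker (phi K m d)

/-- The graph on `[m+1]` whose edges `{i,j}` are the pairs of columns in which the rows
of a Hilbert–Burch matrix (given by the list `t` of pairs) have their nonzero entries. -/
def relGraph {m : ℕ} (t : Fin m → Fin (m + 1) × Fin (m + 1)) :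
    SimpleGraph (Fin (m + 1)) :=
  SimpleGraph.fromRel fun i j => ∃ k, t k = (i, j)

/-- `T(I)`: the set of relation trees (graphs of Hilbert–Burch matrices) of the ideal
generated by the `m+1` monomials with exponent vectors `d i`. -/
def relTrees (K : Type*) [Field K] {σ : Type*} (m : ℕ) (d : Fin (m + 1) → (σ →₀ ℕ)) :
    Set (SimpleGraph (Fin (m + 1))) :=
  {Γ | ∃ t, IsHB K m d t ∧ relGraph t = Γ}

/-- The Taylor graph `G(I)`: the union of all relation trees of `I`. -/
def taylorGraph (K : Type*) [Field K] {σ : Type*} (m : ℕ)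
    (d : Fin (m + 1) → (σ →₀ ℕ)) : SimpleGraph (Fin (m + 1)) :=
  sSup (relTrees K m d)

/-- `I` is (the monomial ideal) minimally generated by the `m+1` monic monomials with
exponent vectors `d i`. -/
def MinGens (K : Type*) [Field K] {σ : Type*} (m : ℕ) (d : Fin (m + 1) → (σ →₀ ℕ))
    (I : Ideal (MvPolynomial σ K)) : Prop :=
  I = Ideal.span (Set.range fun i => (monomial (d i) 1 : MvPolynomial σ K)) ∧
    ∀ j : Fin (m + 1), (monomial (d j) 1 : MvPolynomial σ K) ∉
      Ideal.span ((fun i => (monomial (d i) 1 : MvPolynomial σ K)) '' {i | i ≠ j})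

/-- The ideal generated by the `m+1` monomials with exponent vectors `d i` has a linear
resolution: all generators have the same degree and all the entries of every
Hilbert–Burch matrix of `I` are linear forms (i.e. every Taylor relation occurring as a
row of a Hilbert–Burch matrix is linear). -/
def HasLinearRes (K : Type*) [Field K] {σ : Type*} (m : ℕ)
    (d : Fin (m + 1) → (σ →₀ ℕ)) : Prop :=
  (∃ c, ∀ i, mdeg (d i) = c) ∧
    ∀ t, IsHB K m d t →
      ∀ k, mdeg (d (t k).1 - d (t k).2) = 1 ∧ mdeg (d (t k).2 - d (t k).1) = 1

/-- A graph is chordal if every cycle of length at least `4` has a chord, i.e. an edge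
of the graph joining two vertices of the cycle which is not an edge of the cycle. -/
def IsChordal {V : Type*} (G : SimpleGraph V) : Prop :=
  ∀ ⦃v : V⦄ (w : G.Walk v v), w.IsCycle → 4 ≤ w.length →
    ∃ a b, a ∈ w.support ∧ b ∈ w.support ∧ G.Adj a b ∧ s(a, b) ∉ w.edges

/-- A maximal clique of a graph. -/
def IsMaxClique {V : Type*} (G : SimpleGraph V) (s : Set V) : Prop :=
  G.IsClique s ∧ ∀ t : Set V, G.IsClique t → s ⊆ t → t = s

/-- `b` is the "path-begin" function of the tree `G`: for `i ≠ j`, `b i j` is the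
first vertex after `i` on the unique path in `G` from `i` to `j` (equivalently, the
neighbour of `i` which is one step closer to `j`). -/
def PathBegin {V : Type*} (G : SimpleGraph V) (b : V → V → V) : Prop :=
  ∀ i j : V, i ≠ j → G.Adj i (b i j) ∧ G.dist (b i j) j + 1 = G.dist i j

/-- The index set of the `2m` indeterminates `x_{ij}`: ordered pairs `(i,j)` such that
`{i,j}` is an edge of `G`. -/
abbrev EdgeVar {N : ℕ} (G : SimpleGraph (Fin N)) : Type :=
  {p : Fin N × Fin N // G.Adj p.1 p.2}

/-- `ε` enumerates the edges of `G` (each unordered edge appearing exactly once). -/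
def EdgeEnum {m : ℕ} (G : SimpleGraph (Fin (m + 1)))
    (ε : Fin m → Fin (m + 1) × Fin (m + 1)) : Prop :=
  ∀ i j : Fin (m + 1), G.Adj i j → ∃! k, ε k = (i, j) ∨ ε k = (j, i)

/-- The generic matrix `A(Γ)` attached to the tree `G` with edges enumerated by `ε`:
the `k`-th row, for the `k`-th edge `{i,j}`, has entry `-x_{ij}` in column `i`,
entry `x_{ji}` in column `j` and `0` elsewhere. -/
def genMat (K : Type*) [Field K] {m : ℕ} (G : SimpleGraph (Fin (m + 1)))
    (ε : Fin m → Fin (m + 1) × Fin (m + 1)) (hε : ∀ k, G.Adj (ε k).1 (ε k).2) :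
    Matrix (Fin m) (Fin (m + 1)) (MvPolynomial (EdgeVar G) K) := fun k l =>
  if l = (ε k).1 then -(X ⟨ε k, hε k⟩)
  else if l = (ε k).2 then X ⟨((ε k).2, (ε k).1), (hε k).symm⟩
  else 0

/-- `v_j`: the maximal minor of the generic matrix `A(Γ)` obtained by omitting the
`j`-th column. -/
def genMinor (K : Type*) [Field K] {m : ℕ} (G : SimpleGraph (Fin (m + 1)))
    (ε : Fin m → Fin (m + 1) × Fin (m + 1)) (hε : ∀ k, G.Adj (ε k).1 (ε k).2)
    (j : Fin (m + 1)) : MvPolynomial (EdgeVar G) K :=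
  ((genMat K G ε hε).submatrix id j.succAbove).det

/-- The monomial `∏_{i ≠ j} x_{i, b(i,j)}`. -/
def genV (K : Type*) [Field K] {m : ℕ} (G : SimpleGraph (Fin (m + 1)))
    (b : Fin (m + 1) → Fin (m + 1) → Fin (m + 1))
    (hb : ∀ i j : Fin (m + 1), i ≠ j → G.Adj i (b i j)) (j : Fin (m + 1)) :
    MvPolynomial (EdgeVar G) K :=
  ∏ i, if h : i = j then 1 else X ⟨(i, b i j), hb i j h⟩

/-- The exponent vector of the monomial `∏_{i ≠ j} x_{i, b(i,j)}`. -/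
def genD {m : ℕ} (G : SimpleGraph (Fin (m + 1)))
    (b : Fin (m + 1) → Fin (m + 1) → Fin (m + 1))
    (hb : ∀ i j : Fin (m + 1), i ≠ j → G.Adj i (b i j)) (j : Fin (m + 1)) :
    EdgeVar G →₀ ℕ :=
  ∑ i, if h : i = j then 0 else Finsupp.single ⟨(i, b i j), hb i j h⟩ 1

end

end CMCodim2

open CMCodim2 MvPolynomial
namespace S15
open CMCodim2 MvPolynomial Finset

variable {K : Type*} [Field K] {n m : ℕ}

/-- exponent vector of lcm of two generators -/
noncomputable def lsup (d : Fin (m + 1) → (Fin n →₀ ℕ)) (a b : Fin (m + 1)) : Fin n →₀ ℕ :=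
  (d a - d b) + d b

variable {d : Fin (m + 1) → (Fin n →₀ ℕ)}

lemma lsup_apply (a b : Fin (m+1)) (x : Fin n) :
    lsup d a b x = max (d a x) (d b x) := by
  simp only [lsup, Finsupp.add_apply, Finsupp.tsub_apply]
  omega

lemma lsup_comm (a b : Fin (m+1)) : lsup d a b = lsup d b a := by
  ext x; simp only [lsup_apply]; omega

lemma le_lsup_left (a b : Fin (m+1)) : d a ≤ lsup d a b := by
  intro x; simp [lsup_apply]

lemma le_lsup_right (a b : Fin (m+1)) : d b ≤ lsup d a b := by
  intro x; simp [lsup_apply]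

lemma lsup_le {a b : Fin (m+1)} {D : Fin n →₀ ℕ} (ha : d a ≤ D) (hb : d b ≤ D) :
    lsup d a b ≤ D := by
  intro x; simp only [lsup_apply]; exact max_le (ha x) (hb x)

lemma mdeg_add (a b : Fin n →₀ ℕ) : mdeg (a + b) = mdeg a + mdeg b :=
  Finsupp.sum_add_index' (fun _ => rfl) (fun _ _ _ => rfl)

lemma mdeg_eq_zero {a : Fin n →₀ ℕ} (h : mdeg a = 0) : a = 0 := by
  by_contra hne
  obtain ⟨x, hx⟩ := Finsupp.ne_iff.mp hne
  have hxs : x ∈ a.support := Finsupp.mem_support_iff.mpr (by simpa using hx)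
  have : a x ≤ mdeg a := Finset.single_le_sum (fun i _ => Nat.zero_le _) hxs
  simp only [Finsupp.coe_zero, Pi.zero_apply] at hx
  omega

lemma mdeg_mono {a b : Fin n →₀ ℕ} (h : a ≤ b) : mdeg a ≤ mdeg b := by
  have : b = a + (b - a) := (add_tsub_cancel_of_le h).symm
  rw [this, mdeg_add]; omega

lemma eq_of_le_of_mdeg_le {a b : Fin n →₀ ℕ} (h : a ≤ b) (hm : mdeg b ≤ mdeg a) :
    a = b := by
  have h2 := mdeg_add a (b - a)
  rw [add_tsub_cancel_of_le h] at h2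
  have h3 : b - a = 0 := mdeg_eq_zero (by omega)
  have := add_tsub_cancel_of_le h
  rw [h3, add_zero] at this
  exact this

lemma mdeg_lsup (a b : Fin (m+1)) : mdeg (lsup d a b) = mdeg (d a - d b) + mdeg (d b) :=
  mdeg_add _ _

end S15
namespace S15
open CMCodim2 MvPolynomial Finset

variable {K : Type*} [Field K] {n m : ℕ} {d : Fin (m + 1) → (Fin n →₀ ℕ)}

lemma taylorRel_apply_snd {a b : Fin (m+1)} :
    taylorRel K m d a b b = monomial (d a - d b) (1:K) := by simp [taylorRel]

lemma taylorRel_apply_fst {a b : Fin (m+1)} (hab : a ≠ b) :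
    taylorRel K m d a b a = -(monomial (d b - d a) (1:K)) := by simp [taylorRel, hab]

lemma taylorRel_apply_other {a b i : Fin (m+1)} (hia : i ≠ a) (hib : i ≠ b) :
    taylorRel K m d a b i = 0 := by simp [taylorRel, hia, hib]

lemma sum_two_support {f : Fin (m+1) → MvPolynomial (Fin n) K} {a b : Fin (m+1)}
    (hab : a ≠ b) (h : ∀ i, i ≠ a → i ≠ b → f i = 0) :
    ∑ i, f i = f a + f b := by
  rw [← Finset.sum_subset (Finset.subset_univ ({a, b} : Finset (Fin (m+1))))
      (fun x _ hx => by
        simp only [Finset.mem_insert, Finset.mem_singleton] at hx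
        push_neg at hx
        exact h x hx.1 hx.2)]
  exact Finset.sum_pair hab

lemma phi_taylorRel {a b : Fin (m+1)} (hab : a ≠ b) :
    phi K m d (taylorRel K m d a b) = 0 := by
  show (∑ i, taylorRel K m d a b i * monomial (d i) 1) = 0
  rw [sum_two_support hab (fun i hia hib => by rw [taylorRel_apply_other hia hib, zero_mul])]
  rw [taylorRel_apply_fst hab, taylorRel_apply_snd, monomial_mul, neg_mul, monomial_mul]
  have : (d a - d b) + d b = (d b - d a) + d a := by
    ext x; simp only [Finsupp.add_apply, Finsupp.tsub_apply]; omega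
  rw [this]; ring

lemma taylorRel_mem_ker {a b : Fin (m+1)} (hab : a ≠ b) :
    taylorRel K m d a b ∈ LinearMap.ker (phi K m d) :=
  LinearMap.mem_ker.mpr (phi_taylorRel hab)

lemma taylorRel_swap {a b : Fin (m+1)} (hab : a ≠ b) :
    taylorRel K m d b a = - taylorRel K m d a b := by
  funext i
  by_cases hia : i = a
  · subst hia
    simp [taylorRel, hab, Ne.symm hab]
  · by_cases hib : i = b
    · subst hib
      simp [taylorRel, hia, Ne.symm hab]
    · simp [taylorRel, hia, hib]

/-- `Fv D a` is the vector `monomial (D - d a) • e_a`. -/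
noncomputable def Fv (d : Fin (m + 1) → (Fin n →₀ ℕ)) (D : Fin n →₀ ℕ) (a : Fin (m+1)) :
    Fin (m+1) → MvPolynomial (Fin n) K :=
  Pi.single a (monomial (D - d a) 1)

lemma smul_taylorRel {a b : Fin (m+1)} {D : Fin n →₀ ℕ} (hab : a ≠ b)
    (ha : d a ≤ D) (hb : d b ≤ D) :
    (monomial (D - lsup d a b) (1:K)) • taylorRel K m d a b
      = Fv d D b - Fv d D a := by
  funext i
  simp only [Pi.smul_apply, Pi.sub_apply, Fv, smul_eq_mul]
  by_cases hib : i = b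
  · rw [hib]
    have hexp : D - lsup d a b + (d a - d b) = D - d b := by
      ext x
      simp only [Finsupp.add_apply, Finsupp.tsub_apply, lsup_apply]
      have := ha x; have := hb x; omega
    rw [taylorRel_apply_snd, Pi.single_eq_same, Pi.single_eq_of_ne (Ne.symm hab),
      monomial_mul, sub_zero, mul_one, hexp]
  · by_cases hia : i = a
    · rw [hia]
      have hexp : D - lsup d a b + (d b - d a) = D - d a := by
        ext x
        simp only [Finsupp.add_apply, Finsupp.tsub_apply, lsup_apply]
        have := ha x; have := hb x; omega
      rw [taylorRel_apply_fst hab, Pi.single_eq_same, Pi.single_eq_of_ne hab,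
        mul_neg, monomial_mul, mul_one, zero_sub, hexp]
    · rw [taylorRel_apply_other hia hib, Pi.single_eq_of_ne hia,
        Pi.single_eq_of_ne hib, mul_zero, sub_zero]

lemma taylorRel_eq_Fv_sub {a b : Fin (m+1)} (hab : a ≠ b) :
    taylorRel K m d a b = Fv d (lsup d a b) b - Fv d (lsup d a b) a := by
  have := smul_taylorRel (K := K) (d := d) (D := lsup d a b) hab
    (le_lsup_left (d := d) a b) (le_lsup_right (d := d) a b)
  rwa [tsub_self, monomial_zero', C_1, one_smul] at this

end S15
namespace S15
open CMCodim2 MvPolynomial Finset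

variable {K : Type*} [Field K] {n m : ℕ} {d : Fin (m + 1) → (Fin n →₀ ℕ)}
variable {t : Fin m → Fin (m+1) × Fin (m+1)}

/-- The relation graph of all rows except row `k`. -/
def exGraph (t : Fin m → Fin (m+1) × Fin (m+1)) (k : Fin m) : SimpleGraph (Fin (m+1)) :=
  SimpleGraph.fromRel fun i j => ∃ k', k' ≠ k ∧ t k' = (i, j)

lemma relGraph_adj {a b : Fin (m+1)} :
    (relGraph t).Adj a b ↔ a ≠ b ∧ ((∃ k, t k = (a,b)) ∨ ∃ k, t k = (b,a)) :=
  SimpleGraph.fromRel_adj _ a b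

lemma exGraph_adj {k : Fin m} {a b : Fin (m+1)} :
    (exGraph t k).Adj a b ↔
      a ≠ b ∧ ((∃ k', k' ≠ k ∧ t k' = (a,b)) ∨ ∃ k', k' ≠ k ∧ t k' = (b,a)) :=
  SimpleGraph.fromRel_adj _ a b

lemma exGraph_le (k : Fin m) : exGraph t k ≤ relGraph t := by
  intro a b hab
  rw [exGraph_adj] at hab
  rw [relGraph_adj]
  obtain ⟨hne, h | h⟩ := hab
  · exact ⟨hne, Or.inl ⟨h.choose, h.choose_spec.2⟩⟩
  · exact ⟨hne, Or.inr ⟨h.choose, h.choose_spec.2⟩⟩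

lemma row_adj (ht1 : ∀ k, (t k).1 ≠ (t k).2) (k : Fin m) :
    (relGraph t).Adj (t k).1 (t k).2 :=
  relGraph_adj.mpr ⟨ht1 k, Or.inl ⟨k, rfl⟩⟩

lemma exRow_adj (ht1 : ∀ k, (t k).1 ≠ (t k).2) {k k' : Fin m} (h : k' ≠ k) :
    (exGraph t k).Adj (t k').1 (t k').2 :=
  exGraph_adj.mpr ⟨ht1 k', Or.inl ⟨k', h, rfl⟩⟩

lemma exists_coeff (ht : IsHB K m d t) {v : Fin (m+1) → MvPolynomial (Fin n) K}
    (hv : v ∈ LinearMap.ker (phi K m d)) :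
    ∃ c : Fin m → MvPolynomial (Fin n) K,
      ∑ k, c k • taylorRel K m d (t k).1 (t k).2 = v := by
  rw [← ht.2] at hv
  exact (Submodule.mem_span_range_iff_exists_fun _).mp hv

/-- the `σ_S` functional: sum of the `S`-coordinates weighted by the generators. -/
noncomputable def sigma (d : Fin (m + 1) → (Fin n →₀ ℕ)) (S : Finset (Fin (m+1))) :
    (Fin (m+1) → MvPolynomial (Fin n) K) →ₗ[MvPolynomial (Fin n) K]
      MvPolynomial (Fin n) K where
  toFun v := ∑ i ∈ S, v i * monomial (d i) 1
  map_add' x y := by simp [add_mul, Finset.sum_add_distrib]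
  map_smul' c x := by simp [Finset.mul_sum, mul_assoc]

lemma taylorRel_mul_eq {a b : Fin (m+1)} (hab : a ≠ b) (i : Fin (m+1)) :
    taylorRel K m d a b i * monomial (d i) 1
      = (if i = b then monomial (lsup d a b) (1:K) else 0)
        - (if i = a then monomial (lsup d a b) (1:K) else 0) := by
  by_cases hib : i = b
  · rw [hib, taylorRel_apply_snd, monomial_mul, mul_one,
      if_neg (Ne.symm hab), sub_zero, if_pos rfl]
    rfl
  · by_cases hia : i = a
    · have hexp : (d b - d a) + d a = lsup d a b := by
        ext x
        simp only [Finsupp.add_apply, Finsupp.tsub_apply, lsup_apply]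
        omega
      rw [hia, taylorRel_apply_fst hab, neg_mul, monomial_mul, mul_one,
        if_neg hab, if_pos rfl, zero_sub, hexp]
    · rw [taylorRel_apply_other hia hib, zero_mul, if_neg hia, if_neg hib, sub_zero]

lemma sigma_taylorRel (S : Finset (Fin (m+1))) {a b : Fin (m+1)} (hab : a ≠ b) :
    sigma d S (taylorRel K m d a b)
      = (if b ∈ S then monomial (lsup d a b) (1:K) else 0)
        - (if a ∈ S then monomial (lsup d a b) (1:K) else 0) := by
  show (∑ i ∈ S, taylorRel K m d a b i * monomial (d i) 1) = _
  rw [Finset.sum_congr rfl (fun i _ => taylorRel_mul_eq hab i), Finset.sum_sub_distrib,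
    Finset.sum_ite_eq' S b, Finset.sum_ite_eq' S a]

/-- **Connectivity**: the relation graph of a Hilbert–Burch matrix is connected. -/
lemma good_reachable (ht : IsHB K m d t) (p q : Fin (m+1)) :
    (relGraph t).Reachable p q := by
  classical
  by_contra hreach
  have hpq : p ≠ q := fun h => hreach (h ▸ SimpleGraph.Reachable.refl p)
  set S : Finset (Fin (m+1)) :=
    Finset.univ.filter (fun v => (relGraph t).Reachable p v) with hS
  have hmemS : ∀ v, v ∈ S ↔ (relGraph t).Reachable p v := by
    intro v; simp [hS]
  have hpS : p ∈ S := (hmemS p).mpr (SimpleGraph.Reachable.refl p)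
  have hqS : q ∉ S := fun h => hreach ((hmemS q).mp h)
  obtain ⟨c, hc⟩ := exists_coeff ht (taylorRel_mem_ker hpq)
  have happ := congrArg (sigma d S) hc
  rw [map_sum] at happ
  simp only [LinearMap.map_smul, smul_eq_mul] at happ
  have hzero : ∀ k' ∈ Finset.univ,
      c k' * sigma d S (taylorRel K m d (t k').1 (t k').2) = 0 := by
    intro k' _
    have hadj := row_adj ht.1 k'
    have hiff : ((t k').2 ∈ S ↔ (t k').1 ∈ S) := by
      rw [hmemS, hmemS]
      exact ⟨fun h => h.trans hadj.symm.reachable, fun h => h.trans hadj.reachable⟩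
    rw [sigma_taylorRel S (ht.1 k')]
    by_cases h1 : (t k').1 ∈ S
    · rw [if_pos (hiff.mpr h1), if_pos h1, sub_self, mul_zero]
    · rw [if_neg (fun h => h1 (hiff.mp h)), if_neg h1, sub_self, mul_zero]
  rw [Finset.sum_congr rfl hzero, Finset.sum_const_zero] at happ
  rw [sigma_taylorRel S hpq, if_neg hqS, if_pos hpS, zero_sub] at happ
  have : monomial (lsup d p q) (1:K) = 0 := by
    have := happ.symm
    rwa [neg_eq_zero] at this
  rw [monomial_eq_zero] at this
  exact one_ne_zero this

/-- **Separation bound**: the lcm of a row of a Hilbert–Burch matrix divides the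
lcm of any pair which the row separates. -/
lemma key_div (ht : IsHB K m d t) (k : Fin m) {x y : Fin (m+1)}
    (hxy : ¬ (exGraph t k).Reachable x y) :
    lsup d (t k).1 (t k).2 ≤ lsup d x y := by
  classical
  have hxney : x ≠ y := fun h => hxy (h ▸ SimpleGraph.Reachable.refl x)
  set S : Finset (Fin (m+1)) :=
    Finset.univ.filter (fun v => (exGraph t k).Reachable x v) with hS
  have hmemS : ∀ v, v ∈ S ↔ (exGraph t k).Reachable x v := by
    intro v; simp [hS]
  have hxS : x ∈ S := (hmemS x).mpr (SimpleGraph.Reachable.refl x)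
  have hyS : y ∉ S := fun h => hxy ((hmemS y).mp h)
  obtain ⟨c, hc⟩ := exists_coeff ht (taylorRel_mem_ker hxney)
  have happ := congrArg (sigma d S) hc
  rw [map_sum] at happ
  simp only [LinearMap.map_smul, smul_eq_mul] at happ
  have hother : ∀ k' ∈ Finset.univ, k' ≠ k →
      c k' * sigma d S (taylorRel K m d (t k').1 (t k').2) = 0 := by
    intro k' _ hk'
    have hadj := exRow_adj ht.1 hk'
    have hiff : ((t k').2 ∈ S ↔ (t k').1 ∈ S) := by
      rw [hmemS, hmemS]
      exact ⟨fun h => h.trans hadj.symm.reachable, fun h => h.trans hadj.reachable⟩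
    rw [sigma_taylorRel S (ht.1 k')]
    by_cases h1 : (t k').1 ∈ S
    · rw [if_pos (hiff.mpr h1), if_pos h1, sub_self, mul_zero]
    · rw [if_neg (fun h => h1 (hiff.mp h)), if_neg h1, sub_self, mul_zero]
  rw [Finset.sum_eq_single_of_mem k (Finset.mem_univ k) hother] at happ
  rw [sigma_taylorRel S (ht.1 k), sigma_taylorRel S hxney, if_neg hyS, if_pos hxS,
    zero_sub] at happ
  have hdvd : monomial (lsup d (t k).1 (t k).2) (1:K) ∣ monomial (lsup d x y) (1:K) := by
    by_cases h1 : (t k).1 ∈ S <;> by_cases h2 : (t k).2 ∈ S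
    · rw [if_pos h2, if_pos h1, sub_self, mul_zero] at happ
      exact absurd (monomial_eq_zero.mp (neg_eq_zero.mp happ.symm)) one_ne_zero
    · rw [if_neg h2, if_pos h1, zero_sub, mul_neg] at happ
      exact ⟨c k, by rw [← neg_neg (monomial (lsup d x y) (1:K)), ← happ]; ring⟩
    · rw [if_pos h2, if_neg h1, sub_zero] at happ
      exact ⟨-(c k), by rw [← neg_neg (monomial (lsup d x y) (1:K)), ← happ]; ring⟩
    · rw [if_neg h2, if_neg h1, sub_self, mul_zero] at happ
      exact absurd (monomial_eq_zero.mp (neg_eq_zero.mp happ.symm)) one_ne_zero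
  rcases (monomial_dvd_monomial.mp hdvd).1 with h | h
  · exact absurd h one_ne_zero
  · exact h

end S15
namespace S15
open CMCodim2 MvPolynomial Finset

variable {K : Type*} [Field K] {n m : ℕ} {d : Fin (m + 1) → (Fin n →₀ ℕ)}
variable {t : Fin m → Fin (m+1) × Fin (m+1)}

/-- evaluation of a polynomial at the all-ones point -/
noncomputable def ev1 (K : Type*) [Field K] (n : ℕ) : MvPolynomial (Fin n) K →+* K :=
  eval (fun _ => (1:K))

lemma ev1_monomial (s : Fin n →₀ ℕ) : ev1 K n (monomial s (1:K)) = 1 := by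
  simp [ev1, eval_monomial, Finsupp.prod]

/-- entrywise evaluation at the all-ones point -/
noncomputable def Psi (K : Type*) [Field K] (n m : ℕ) :
    (Fin (m+1) → MvPolynomial (Fin n) K) → (Fin (m+1) → K) :=
  fun v i => ev1 K n (v i)

lemma Psi_taylorRel {a b : Fin (m+1)} (hab : a ≠ b) :
    Psi K n m (taylorRel K m d a b) = Pi.single b (1:K) - Pi.single a 1 := by
  funext i
  simp only [Psi, Pi.sub_apply]
  by_cases hib : i = b
  · rw [hib, taylorRel_apply_snd, ev1_monomial, Pi.single_eq_same,
      Pi.single_eq_of_ne (Ne.symm hab), sub_zero]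
  · by_cases hia : i = a
    · rw [hia, taylorRel_apply_fst hab, map_neg, ev1_monomial,
        Pi.single_eq_same, Pi.single_eq_of_ne hab, zero_sub]
    · rw [taylorRel_apply_other hia hib, map_zero, Pi.single_eq_of_ne hia,
        Pi.single_eq_of_ne hib, sub_zero]

lemma Psi_sum_smul (c : Fin m → MvPolynomial (Fin n) K)
    (v : Fin m → (Fin (m+1) → MvPolynomial (Fin n) K)) :
    Psi K n m (∑ k, c k • v k) = ∑ k, ev1 K n (c k) • Psi K n m (v k) := by
  funext i
  simp only [Psi, Finset.sum_apply, Pi.smul_apply, smul_eq_mul, map_sum, map_mul]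

/-- the image of the rows under entrywise evaluation at the all-ones point -/
noncomputable def Wv (K : Type*) [Field K] {m : ℕ} (t : Fin m → Fin (m+1) × Fin (m+1)) :
    Fin m → (Fin (m+1) → K) :=
  fun k => Pi.single (t k).2 1 - Pi.single (t k).1 1

lemma diff_mem (ht : IsHB K m d t) (p q : Fin (m+1)) :
    (Pi.single q 1 - Pi.single p 1 : Fin (m+1) → K) ∈
      Submodule.span K (Set.range (Wv K t)) := by
  by_cases hpq : p = q
  · subst hpq; simpa using zero_mem _
  have hpq' : p ≠ q := hpq
  obtain ⟨c, hc⟩ := exists_coeff ht (taylorRel_mem_ker hpq')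
  have happ := congrArg (Psi K n m) hc
  rw [Psi_sum_smul, Psi_taylorRel hpq'] at happ
  rw [← happ]
  refine Submodule.sum_mem _ (fun k _ => Submodule.smul_mem _ _ ?_)
  have : Psi K n m (taylorRel K m d (t k).1 (t k).2) = Wv K t k :=
    Psi_taylorRel (ht.1 k)
  rw [this]
  exact Submodule.subset_span (Set.mem_range_self k)

/-- the standard "difference" family is linearly independent -/
noncomputable def Bv (K : Type*) [Field K] (m : ℕ) : Fin m → (Fin (m+1) → K) :=
  fun i => Pi.single i.succ 1 - Pi.single 0 1

lemma Bv_indep : LinearIndependent K (Bv K m) := by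
  rw [Fintype.linearIndependent_iff]
  intro g hg i
  have h := congrFun hg i.succ
  have hterm : ∀ j : Fin m, (g j • Bv K m j) i.succ = if i = j then g j else 0 := by
    intro j
    simp only [Bv, Pi.smul_apply, Pi.sub_apply, smul_eq_mul, Pi.single_apply,
      (Fin.succ_ne_zero i), Fin.succ_inj, if_false]
    by_cases hij : i = j
    · rw [if_pos hij, if_pos hij]; ring
    · rw [if_neg hij, if_neg hij]; ring
  rw [Finset.sum_apply, Finset.sum_congr rfl (fun j _ => hterm j),
    Finset.sum_ite_eq Finset.univ i g, if_pos (Finset.mem_univ i)] at h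
  exact h

lemma W_indep (ht : IsHB K m d t) : LinearIndependent K (Wv K t) := by
  rw [linearIndependent_iff_card_eq_finrank_span]
  have hle : (Set.range (Wv K t)).finrank K ≤ m := by
    simpa using finrank_range_le_card (Wv K t)
  have hge : m ≤ (Set.range (Wv K t)).finrank K := by
    have hsub : Submodule.span K (Set.range (Bv K m)) ≤
        Submodule.span K (Set.range (Wv K t)) := by
      rw [Submodule.span_le]
      rintro _ ⟨j, rfl⟩
      exact diff_mem ht 0 j.succ
    have h1 : Module.finrank K (Submodule.span K (Set.range (Bv K m))) = m := by
      rw [finrank_span_eq_card (Bv_indep (K := K) (m := m))]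
      simp
    calc m = Module.finrank K (Submodule.span K (Set.range (Bv K m))) := h1.symm
      _ ≤ (Set.range (Wv K t)).finrank K := Submodule.finrank_mono hsub
  simp only [Fintype.card_fin]
  omega

/-- **Bridge lemma**: removing a row of a Hilbert–Burch matrix disconnects its
endpoints. -/
lemma bridge (ht : IsHB K m d t) (k : Fin m) :
    ¬ (exGraph t k).Reachable (t k).1 (t k).2 := by
  intro hreach
  obtain ⟨w⟩ := hreach
  have hmem : ∀ {a b : Fin (m+1)} (_ : (exGraph t k).Walk a b),
      (Pi.single b 1 - Pi.single a 1 : Fin (m+1) → K) ∈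
        Submodule.span K (Wv K t '' {k' | k' ≠ k}) := by
    intro a b w
    induction w with
    | nil => simpa using zero_mem _
    | @cons a c b h p ih =>
      have hstep : (Pi.single c 1 - Pi.single a 1 : Fin (m+1) → K) ∈
          Submodule.span K (Wv K t '' {k' | k' ≠ k}) := by
        rw [exGraph_adj] at h
        obtain ⟨hne, ⟨k', hk', hk⟩ | ⟨k', hk', hk⟩⟩ := h
        · have : Wv K t k' = Pi.single c 1 - Pi.single a 1 := by rw [Wv, hk]
          rw [← this]
          exact Submodule.subset_span ⟨k', hk', rfl⟩
        · have : Wv K t k' = Pi.single a 1 - Pi.single c 1 := by rw [Wv, hk]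
          have h2 : (Pi.single c 1 - Pi.single a 1 : Fin (m+1) → K) = -(Wv K t k') := by
            rw [this]; ring
          rw [h2]
          exact Submodule.neg_mem _ (Submodule.subset_span ⟨k', hk', rfl⟩)
      have := Submodule.add_mem _ ih hstep
      rwa [sub_add_sub_cancel] at this
  have hk : Wv K t k ∈ Submodule.span K (Wv K t '' {k' | k' ≠ k}) := hmem w
  exact (W_indep ht).notMem_span_image (by simp) hk

/-- every vertex is reachable from one of the endpoints of a removed row -/
lemma reach_endpoint (ht : IsHB K m d t) (k : Fin m) (v : Fin (m+1)) :
    (exGraph t k).Reachable (t k).1 v ∨ (exGraph t k).Reachable (t k).2 v := by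
  obtain ⟨w⟩ := good_reachable ht (t k).1 v
  have main : ∀ {a b : Fin (m+1)}, (relGraph t).Walk a b →
      ((exGraph t k).Reachable (t k).1 a ∨ (exGraph t k).Reachable (t k).2 a) →
      ((exGraph t k).Reachable (t k).1 b ∨ (exGraph t k).Reachable (t k).2 b) := by
    intro a b w
    induction w with
    | nil => exact id
    | @cons a c b h p ih =>
      intro hbase
      apply ih
      rw [relGraph_adj] at h
      obtain ⟨hne, ⟨k', hk⟩ | ⟨k', hk⟩⟩ := h
      · by_cases hkk : k' = k
        · subst hkk
          right
          rw [hk]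
        · have hadj : (exGraph t k).Adj a c := exGraph_adj.mpr ⟨hne, Or.inl ⟨k', hkk, hk⟩⟩
          rcases hbase with hb | hb
          · exact Or.inl (hb.trans hadj.reachable)
          · exact Or.inr (hb.trans hadj.reachable)
      · by_cases hkk : k' = k
        · subst hkk
          left
          rw [hk]
        · have hadj : (exGraph t k).Adj a c :=
            exGraph_adj.mpr ⟨hne, Or.inr ⟨k', hkk, hk⟩⟩
          rcases hbase with hb | hb
          · exact Or.inl (hb.trans hadj.reachable)
          · exact Or.inr (hb.trans hadj.reachable)
  exact main w (Or.inl (SimpleGraph.Reachable.refl _))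

end S15
namespace S15
open CMCodim2 MvPolynomial Finset

variable {K : Type*} [Field K] {n m : ℕ} {d : Fin (m + 1) → (Fin n →₀ ℕ)}
variable {t : Fin m → Fin (m+1) × Fin (m+1)}

/-- The span of all rows except row `k`. -/
noncomputable def SpanEx (d : Fin (m + 1) → (Fin n →₀ ℕ)) (t : Fin m → Fin (m+1) × Fin (m+1))
    (k : Fin m) : Submodule (MvPolynomial (Fin n) K) (Fin (m+1) → MvPolynomial (Fin n) K) :=
  Submodule.span _ ((fun k' => taylorRel K m d (t k').1 (t k').2) '' {k' | k' ≠ k})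

/-- If a walk in `exGraph t k` avoids the edge `s(a,c)` of row `k'`, it transfers to
`exGraph t k'`. -/
lemma walk_transfers {k k' : Fin m} {a c x y : Fin (m+1)}
    (hk : t k' = (a, c) ∨ t k' = (c, a))
    {P : (exGraph t k).Walk x y} (hnotE : s(a,c) ∉ P.edges) :
    ∀ e ∈ P.edges, e ∈ (exGraph t k').edgeSet := by
  intro e he
  induction e with
  | h u v =>
    have hadj : (exGraph t k).Adj u v := P.edges_subset_edgeSet he
    rw [exGraph_adj] at hadj
    obtain ⟨hne, ⟨k'', hk'', huv⟩ | ⟨k'', hk'', huv⟩⟩ := hadj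
    · by_cases hkk : k'' = k'
      · exfalso
        subst hkk
        rw [huv] at hk
        rcases hk with hk | hk
        · obtain ⟨h1, h2⟩ := Prod.mk.injEq .. ▸ hk
          rw [h1, h2] at he
          exact hnotE he
        · obtain ⟨h1, h2⟩ := Prod.mk.injEq .. ▸ hk
          rw [h1, h2, Sym2.eq_swap] at he
          exact hnotE he
      · rw [SimpleGraph.mem_edgeSet]
        exact exGraph_adj.mpr ⟨hne, Or.inl ⟨k'', hkk, huv⟩⟩
    · by_cases hkk : k'' = k'
      · exfalso
        subst hkk
        rw [huv] at hk
        rcases hk with hk | hk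
        · obtain ⟨h1, h2⟩ := Prod.mk.injEq .. ▸ hk
          rw [h1, h2, Sym2.eq_swap] at he
          exact hnotE he
        · obtain ⟨h1, h2⟩ := Prod.mk.injEq .. ▸ hk
          rw [h1, h2] at he
          exact hnotE he
      · rw [SimpleGraph.mem_edgeSet]
        exact exGraph_adj.mpr ⟨hne, Or.inr ⟨k'', hkk, huv⟩⟩

/-- **Telescoping segment lemma**. -/
lemma seg (ht : IsHB K m d t) (k : Fin m) (D : Fin n →₀ ℕ) :
    ∀ {a b : Fin (m+1)} (P : (exGraph t k).Walk a b), P.IsPath → d a ≤ D → d b ≤ D →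
      Fv d D b - Fv d D a ∈ SpanEx (K := K) d t k := by
  intro a b P
  induction P with
  | nil =>
    intro _ _ _
    rw [sub_self]
    exact zero_mem _
  | @cons a c b h P ih =>
    intro hP ha hb
    have hcons := (SimpleGraph.Walk.cons_isPath_iff h P).mp hP
    have hac : a ≠ c := h.ne
    -- the row giving the first step
    have h' := h
    rw [exGraph_adj] at h'
    have horient : ∃ k', k' ≠ k ∧ (t k' = (a, c) ∨ t k' = (c, a)) := by
      obtain ⟨_, ⟨k', hk', hk⟩ | ⟨k', hk', hk⟩⟩ := h'
      · exact ⟨k', hk', Or.inl hk⟩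
      · exact ⟨k', hk', Or.inr hk⟩
    obtain ⟨k', hk'k, hk⟩ := horient
    -- the rest of the path avoids the edge of row k'
    have hnotE : s(a,c) ∉ P.edges := fun he =>
      hcons.2 (P.fst_mem_support_of_mem_edges he)
    -- separation: row k' separates a from b
    have hsep : ¬ (exGraph t k').Reachable a b := by
      intro hab
      have hcb : (exGraph t k').Reachable c b :=
        ⟨P.transfer _ (walk_transfers hk hnotE)⟩
      have hac2 : (exGraph t k').Reachable a c := hab.trans hcb.symm
      rcases hk with hk | hk
      · exact bridge ht k' (by rw [hk]; exact hac2)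
      · exact bridge ht k' (by rw [hk]; exact hac2.symm)
    have hdiv := key_div ht k' hsep
    have hlac : lsup d a c ≤ D := by
      have heq : lsup d (t k').1 (t k').2 = lsup d a c := by
        rcases hk with hk | hk
        · rw [hk]
        · rw [hk]; exact lsup_comm (d := d) c a
      rw [heq] at hdiv
      exact le_trans hdiv (lsup_le ha hb)
    have hdc : d c ≤ D := le_trans (le_lsup_right (d := d) a c) hlac
    -- first step membership
    have hstep : Fv d D c - Fv d D a ∈ SpanEx (K := K) d t k := by
      rw [← smul_taylorRel hac ha hdc]
      rcases hk with hk | hk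
      · refine Submodule.smul_mem _ _ (Submodule.subset_span ⟨k', hk'k, ?_⟩)
        show taylorRel K m d (t k').1 (t k').2 = taylorRel K m d a c
        rw [hk]
      · have hrow : taylorRel K m d (t k').1 (t k').2 = - taylorRel K m d a c := by
          rw [hk]
          exact taylorRel_swap hac
        have hswap : taylorRel K m d a c = - taylorRel K m d (t k').1 (t k').2 := by
          rw [hrow, neg_neg]
        rw [hswap, smul_neg]
        exact Submodule.neg_mem _
          (Submodule.smul_mem _ _ (Submodule.subset_span ⟨k', hk'k, rfl⟩))
    have hrest := ih hcons.1 hdc hb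
    have := Submodule.add_mem _ hrest hstep
    rwa [sub_add_sub_cancel] at this

/-- **Exchange lemma**: replacing a row of a Hilbert–Burch matrix by a Taylor relation
of a pair separated by that row and dividing its lcm gives a Hilbert–Burch matrix. -/
lemma exchange (ht : IsHB K m d t) (k : Fin m) {p q : Fin (m+1)}
    (hrp : (exGraph t k).Reachable (t k).1 p)
    (hrq : ¬ (exGraph t k).Reachable (t k).1 q)
    (hdp : d p ≤ lsup d (t k).1 (t k).2) (hdq : d q ≤ lsup d (t k).1 (t k).2) :
    IsHB K m d (Function.update t k (p, q)) := by
  have hpq : p ≠ q := fun h => hrq (h ▸ hrp)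
  have hij : (t k).1 ≠ (t k).2 := ht.1 k
  constructor
  · intro k'
    by_cases hkk : k' = k
    · subst hkk; simp only [Function.update_self]; exact hpq
    · simp only [Function.update_of_ne hkk]; exact ht.1 k'
  · apply le_antisymm
    · rw [Submodule.span_le]
      rintro _ ⟨k', rfl⟩
      by_cases hkk : k' = k
      · subst hkk
        simp only [Function.update_self]
        exact taylorRel_mem_ker hpq
      · simp only [Function.update_of_ne hkk]
        exact taylorRel_mem_ker (ht.1 k')
    · rw [← ht.2, Submodule.span_le]
      rintro _ ⟨k'', rfl⟩
      by_cases hkk : k'' = k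
      · rw [hkk]
        show taylorRel K m d (t k).1 (t k).2 ∈ _
        have hSpanEx_le : SpanEx (K := K) d t k ≤
            Submodule.span (MvPolynomial (Fin n) K)
              (Set.range fun k' => taylorRel K m d
                ((Function.update t k (p,q)) k').1 ((Function.update t k (p,q)) k').2) := by
          rw [SpanEx, Submodule.span_le]
          rintro _ ⟨k', hk', rfl⟩
          apply Submodule.subset_span
          refine ⟨k', ?_⟩
          simp only [Function.update_of_ne hk']
        have hrqj : (exGraph t k).Reachable (t k).2 q :=
          (reach_endpoint ht k q).resolve_left hrq
        obtain ⟨w1⟩ := hrp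
        have hseg1 := seg ht k (lsup d (t k).1 (t k).2) w1.bypass w1.bypass_isPath
          (le_lsup_left (d := d) (t k).1 (t k).2) hdp
        obtain ⟨w2⟩ := hrqj.symm
        have hseg2 := seg ht k (lsup d (t k).1 (t k).2) w2.bypass w2.bypass_isPath
          hdq (le_lsup_right (d := d) (t k).1 (t k).2)
        have hmid : Fv d (lsup d (t k).1 (t k).2) q - Fv d (lsup d (t k).1 (t k).2) p ∈
            Submodule.span (MvPolynomial (Fin n) K)
              (Set.range fun k' => taylorRel K m d
                ((Function.update t k (p,q)) k').1 ((Function.update t k (p,q)) k').2) := by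
          rw [← smul_taylorRel hpq hdp hdq]
          refine Submodule.smul_mem _ _ (Submodule.subset_span ⟨k, ?_⟩)
          simp only [Function.update_self]
        have h3 : taylorRel K m d (t k).1 (t k).2 =
            (Fv d (lsup d (t k).1 (t k).2) (t k).2 - Fv d (lsup d (t k).1 (t k).2) q)
            + ((Fv d (lsup d (t k).1 (t k).2) q - Fv d (lsup d (t k).1 (t k).2) p)
              + (Fv d (lsup d (t k).1 (t k).2) p - Fv d (lsup d (t k).1 (t k).2) (t k).1)) := by
          rw [taylorRel_eq_Fv_sub hij]
          abel
        rw [h3]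
        exact add_mem (hSpanEx_le hseg2) (add_mem hmid (hSpanEx_le hseg1))
      · apply Submodule.subset_span
        refine ⟨k'', ?_⟩
        simp only [Function.update_of_ne hkk]

end S15
namespace S15
open CMCodim2 MvPolynomial Finset

variable {K : Type*} [Field K] {n m : ℕ} {d : Fin (m + 1) → (Fin n →₀ ℕ)}
variable {t : Fin m → Fin (m+1) × Fin (m+1)}

lemma taylorGraph_adj_iff {a b : Fin (m+1)} :
    (taylorGraph K m d).Adj a b ↔
      ∃ t : Fin m → Fin (m+1) × Fin (m+1), IsHB K m d t ∧ (relGraph t).Adj a b := by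
  rw [taylorGraph, SimpleGraph.sSup_adj]
  constructor
  · rintro ⟨Γ, ⟨t, ht, rfl⟩, hadj⟩
    exact ⟨t, ht, hadj⟩
  · rintro ⟨t, ht, hadj⟩
    exact ⟨relGraph t, ⟨t, ht, rfl⟩, hadj⟩

lemma adj_of_isHB_row (ht : IsHB K m d t) (k : Fin m) :
    (taylorGraph K m d).Adj (t k).1 (t k).2 :=
  taylorGraph_adj_iff.mpr ⟨t, ht, row_adj ht.1 k⟩

lemma row_mdeg_lsup (hlin : HasLinearRes K m d) {c : ℕ} (hc : ∀ i, mdeg (d i) = c)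
    (ht : IsHB K m d t) (k : Fin m) :
    mdeg (lsup d (t k).1 (t k).2) = c + 1 := by
  have h1 := (hlin.2 t ht k).1
  rw [mdeg_lsup, h1, hc]
  omega

lemma edge_mdeg (hlin : HasLinearRes K m d) {c : ℕ} (hc : ∀ i, mdeg (d i) = c)
    {a b : Fin (m+1)} (hadj : (taylorGraph K m d).Adj a b) :
    mdeg (lsup d a b) = c + 1 := by
  obtain ⟨t, ht, hadj'⟩ := taylorGraph_adj_iff.mp hadj
  rw [relGraph_adj] at hadj'
  obtain ⟨hne, ⟨k, hk⟩ | ⟨k, hk⟩⟩ := hadj'.imp id id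
  · have := row_mdeg_lsup hlin hc ht k
    rw [hk] at this
    exact this
  · have := row_mdeg_lsup hlin hc ht k
    rw [hk] at this
    rw [lsup_comm]
    exact this

lemma d_inj {I : Ideal (MvPolynomial (Fin n) K)} (hgen : MinGens K m d I) :
    Function.Injective d := by
  intro p q hpq
  by_contra hne
  apply hgen.2 q
  apply Ideal.subset_span
  refine ⟨p, hne, ?_⟩
  show monomial (d p) (1:K) = monomial (d q) 1
  rw [hpq]

/-- variant of `walk_transfers` for walks in the full relation graph -/
lemma walk_transfers' {k' : Fin m} {a c x y : Fin (m+1)}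
    (hk : t k' = (a, c) ∨ t k' = (c, a))
    {P : (relGraph t).Walk x y} (hnotE : s(a,c) ∉ P.edges) :
    ∀ e ∈ P.edges, e ∈ (exGraph t k').edgeSet := by
  intro e he
  induction e with
  | h u v =>
    have hadj : (relGraph t).Adj u v := P.edges_subset_edgeSet he
    rw [relGraph_adj] at hadj
    obtain ⟨hne, ⟨k'', huv⟩ | ⟨k'', huv⟩⟩ := hadj
    · by_cases hkk : k'' = k'
      · exfalso
        subst hkk
        rw [huv] at hk
        rcases hk with hk | hk
        · obtain ⟨h1, h2⟩ := Prod.mk.injEq .. ▸ hk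
          rw [h1, h2] at he
          exact hnotE he
        · obtain ⟨h1, h2⟩ := Prod.mk.injEq .. ▸ hk
          rw [h1, h2, Sym2.eq_swap] at he
          exact hnotE he
      · rw [SimpleGraph.mem_edgeSet]
        exact exGraph_adj.mpr ⟨hne, Or.inl ⟨k'', hkk, huv⟩⟩
    · by_cases hkk : k'' = k'
      · exfalso
        subst hkk
        rw [huv] at hk
        rcases hk with hk | hk
        · obtain ⟨h1, h2⟩ := Prod.mk.injEq .. ▸ hk
          rw [h1, h2, Sym2.eq_swap] at he
          exact hnotE he
        · obtain ⟨h1, h2⟩ := Prod.mk.injEq .. ▸ hk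
          rw [h1, h2] at he
          exact hnotE he
      · rw [SimpleGraph.mem_edgeSet]
        exact exGraph_adj.mpr ⟨hne, Or.inr ⟨k'', hkk, huv⟩⟩

/-- **Key lemma**: any two distinct generators dividing a common monomial of degree
`c+1` are adjacent in the Taylor graph. -/
lemma key_adj (hlin : HasLinearRes K m d) (hdinj : Function.Injective d)
    {c : ℕ} (hc : ∀ i, mdeg (d i) = c)
    (ht : IsHB K m d t) {p q : Fin (m+1)} (hpq : p ≠ q)
    {D : Fin n →₀ ℕ} (hp : d p ≤ D) (hq : d q ≤ D) (hD : mdeg D ≤ c + 1) :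
    (taylorGraph K m d).Adj p q := by
  have hdpq : d p ≠ d q := fun h => hpq (hdinj h)
  have hlpq_le : lsup d p q ≤ D := lsup_le hp hq
  have hmlow : c + 1 ≤ mdeg (lsup d p q) := by
    have h1 : d q ≤ lsup d p q := le_lsup_right (d := d) p q
    have h2 : d q ≠ lsup d p q := by
      intro h
      have hple : d p ≤ d q := h ▸ le_lsup_left (d := d) p q
      exact hdpq (eq_of_le_of_mdeg_le hple (by rw [hc p, hc q]))
    rcases lt_or_eq_of_le (mdeg_mono h1) with hlt | heq
    · rw [hc q] at hlt; omega
    · exact absurd (eq_of_le_of_mdeg_le h1 heq.ge) h2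
  have hmeq : mdeg (lsup d p q) = c + 1 :=
    le_antisymm (le_trans (mdeg_mono hlpq_le) hD) hmlow
  obtain ⟨w⟩ := good_reachable ht p q
  have hPp : SimpleGraph.Walk.IsPath w.bypass := w.bypass_isPath
  obtain ⟨z, h, P', hPdecomp⟩ := SimpleGraph.Walk.not_nil_iff.mp
    (SimpleGraph.Walk.not_nil_of_ne hpq (p := w.bypass))
  rw [hPdecomp] at hPp
  have hcons := (SimpleGraph.Walk.cons_isPath_iff h P').mp hPp
  have hpz : p ≠ z := h.ne
  have h' := h
  rw [relGraph_adj] at h'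
  have horient : ∃ k₁, t k₁ = (p, z) ∨ t k₁ = (z, p) := by
    obtain ⟨_, ⟨k₁, hk⟩ | ⟨k₁, hk⟩⟩ := h'
    · exact ⟨k₁, Or.inl hk⟩
    · exact ⟨k₁, Or.inr hk⟩
  obtain ⟨k₁, hk⟩ := horient
  have hnotE : s(p,z) ∉ P'.edges := fun he =>
    hcons.2 (P'.fst_mem_support_of_mem_edges he)
  have hsep : ¬ (exGraph t k₁).Reachable p q := by
    intro hpq_r
    have hzq : (exGraph t k₁).Reachable z q :=
      ⟨P'.transfer _ (walk_transfers' hk hnotE)⟩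
    have hreach_pz : (exGraph t k₁).Reachable p z := hpq_r.trans hzq.symm
    rcases hk with hk | hk
    · exact bridge ht k₁ (by rw [hk]; exact hreach_pz)
    · exact bridge ht k₁ (by rw [hk]; exact hreach_pz.symm)
  have hdiv := key_div ht k₁ hsep
  have hmrow := row_mdeg_lsup hlin hc ht k₁
  have heq : lsup d (t k₁).1 (t k₁).2 = lsup d p q :=
    eq_of_le_of_mdeg_le hdiv (by rw [hmeq, hmrow])
  rcases hk with hk | hk
  · have hrp : (exGraph t k₁).Reachable (t k₁).1 p := by rw [hk]
    have hrq : ¬ (exGraph t k₁).Reachable (t k₁).1 q := by rw [hk]; exact hsep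
    have hdp : d p ≤ lsup d (t k₁).1 (t k₁).2 := by
      rw [heq]; exact le_lsup_left (d := d) p q
    have hdq : d q ≤ lsup d (t k₁).1 (t k₁).2 := by
      rw [heq]; exact le_lsup_right (d := d) p q
    have ht' := exchange ht k₁ hrp hrq hdp hdq
    have := adj_of_isHB_row ht' k₁
    simpa only [Function.update_self] using this
  · have hrp : (exGraph t k₁).Reachable (t k₁).1 q := by
      refine (reach_endpoint ht k₁ q).resolve_right ?_
      rw [hk]
      exact hsep
    have hrq : ¬ (exGraph t k₁).Reachable (t k₁).1 p := by
      intro hzp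
      have := bridge ht k₁
      rw [hk] at this hzp
      exact this hzp
    have hdp : d q ≤ lsup d (t k₁).1 (t k₁).2 := by
      rw [heq]; exact le_lsup_right (d := d) p q
    have hdq : d p ≤ lsup d (t k₁).1 (t k₁).2 := by
      rw [heq]; exact le_lsup_left (d := d) p q
    have ht' := exchange ht k₁ hrp hrq hdp hdq
    have := adj_of_isHB_row ht' k₁
    simp only [Function.update_self] at this
    exact this.symm

end S15
namespace S15
open SimpleGraph

variable {V : Type*} {G : SimpleGraph V}

lemma support_get : ∀ {x y : V} (p : G.Walk x y) (i : ℕ) (h : i < p.support.length),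
    p.support.get ⟨i, h⟩ = p.getVert i := by
  intro x y p
  induction p with
  | nil =>
    intro i h
    simp only [Walk.support_nil, List.length_singleton] at h
    interval_cases i
    rfl
  | @cons x z y hadj p ih =>
    intro i h
    cases i with
    | zero => rfl
    | succ i =>
      rw [Walk.getVert_cons_succ]
      rw [show (Walk.cons hadj p).support.get ⟨i+1, h⟩
          = p.support.get ⟨i, by
            have := h
            rw [Walk.support_cons, List.length_cons] at this
            omega⟩ from rfl]
      exact ih i _

lemma path_getVert_inj {x y : V} {p : G.Walk x y} (hp : p.IsPath) {i j : ℕ}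
    (hik : i ≤ p.length) (hjk : j ≤ p.length) (h : p.getVert i = p.getVert j) :
    i = j := by
  have hnodup : p.support.Nodup := hp.support_nodup
  have hlen : p.support.length = p.length + 1 := Walk.length_support p
  have hi : i < p.support.length := by omega
  have hj : j < p.support.length := by omega
  rw [← support_get p i hi, ← support_get p j hj] at h
  have := (List.Nodup.get_inj_iff hnodup).mp h
  exact congrArg Fin.val this

/-- injectivity of `getVert` on `[1, length]` for a cycle -/
lemma cycle_getVert_inj {v : V} {w : G.Walk v v} (hw : w.IsCycle) {i j : ℕ}
    (hi1 : 1 ≤ i) (hik : i ≤ w.length) (hj1 : 1 ≤ j) (hjk : j ≤ w.length)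
    (h : w.getVert i = w.getVert j) : i = j := by
  obtain ⟨z, hadj, q, hdec⟩ := Walk.not_nil_iff.mp hw.not_nil
  subst hdec
  have hq : q.IsPath := ((Walk.cons_isCycle_iff q hadj).mp hw).1
  rw [Walk.length_cons] at hik hjk
  obtain ⟨i, rfl⟩ : ∃ i', i = i' + 1 := ⟨i - 1, by omega⟩
  obtain ⟨j, rfl⟩ : ∃ j', j = j' + 1 := ⟨j - 1, by omega⟩
  rw [Walk.getVert_cons_succ, Walk.getVert_cons_succ] at h
  have := path_getVert_inj hq (by omega) (by omega) h
  omega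

lemma edge_getVert : ∀ {x y : V} (p : G.Walk x y) (e : Sym2 V) (_ : e ∈ p.edges),
    ∃ i, i < p.length ∧ e = s(p.getVert i, p.getVert (i+1)) := by
  intro x y p
  induction p with
  | nil => intro e he; simp only [Walk.edges_nil, List.not_mem_nil] at he
  | @cons x z y hadj p ih =>
    intro e he
    rw [Walk.edges_cons, List.mem_cons] at he
    rcases he with he | he
    · refine ⟨0, by simp [Walk.length_cons], ?_⟩
      rw [he, show (Walk.cons hadj p).getVert 0 = x from Walk.getVert_zero _,
        show (Walk.cons hadj p).getVert (0+1) = z by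
          rw [Walk.getVert_cons_succ, Walk.getVert_zero]]
    · obtain ⟨i, hi, hei⟩ := ih e he
      refine ⟨i+1, by rw [Walk.length_cons]; omega, ?_⟩
      rw [hei]
      rfl

lemma getVert_mem_support {x y : V} (p : G.Walk x y) {i : ℕ} (hi : i ≤ p.length) :
    p.getVert i ∈ p.support :=
  Walk.mem_support_iff_exists_getVert.mpr ⟨i, rfl, hi⟩

/-- two positions on a cycle at cyclic distance at least 2 are not joined by an
edge of the cycle -/
lemma chord_not_edge {v : V} {w : G.Walk v v} (hw : w.IsCycle) {a b : ℕ}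
    (hab : a < b) (hbk : b ≤ w.length - 1) (hgap : a + 2 ≤ b)
    (hno : ¬(a = 0 ∧ b = w.length - 1)) :
    s(w.getVert a, w.getVert b) ∉ w.edges := by
  intro he
  have hk3 := hw.three_le_length
  have h0k : w.getVert 0 = w.getVert w.length := by
    rw [Walk.getVert_zero, Walk.getVert_length]
  obtain ⟨i, hik, hei⟩ := edge_getVert w _ he
  rw [Sym2.eq_iff] at hei
  rcases hei with ⟨h1, h2⟩ | ⟨h1, h2⟩
  · -- getVert a = getVert i, getVert b = getVert (i+1)
    rcases Nat.eq_zero_or_pos a with ha0 | ha1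
    · subst ha0
      rcases Nat.eq_zero_or_pos i with hi0 | hi1
      · subst hi0
        have := cycle_getVert_inj hw (by omega) (by omega) (by omega) (by omega) h2.symm
        omega
      · rw [h0k] at h1
        have := cycle_getVert_inj hw (by omega) (by omega) (by omega) (by omega) h1.symm
        omega
    · rcases Nat.eq_zero_or_pos i with hi0 | hi1
      · subst hi0
        rw [h0k] at h1
        have := cycle_getVert_inj hw (by omega) (by omega) (by omega) (by omega) h1
        omega
      · have hia := cycle_getVert_inj hw (by omega) (by omega) (by omega) (by omega) h1
        subst hia
        have := cycle_getVert_inj hw (by omega) (by omega) (by omega) (by omega) h2.symm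
        omega
  · -- getVert a = getVert (i+1), getVert b = getVert i
    rcases Nat.eq_zero_or_pos i with hi0 | hi1
    · subst hi0
      rw [h0k] at h2
      have := cycle_getVert_inj hw (by omega) (by omega) (by omega) (by omega) h2
      omega
    · have hib := cycle_getVert_inj hw (by omega) (by omega) (by omega) (by omega) h2
      subst hib
      rcases Nat.eq_zero_or_pos a with ha0 | ha1
      · subst ha0
        rw [h0k] at h1
        have := cycle_getVert_inj hw (by omega) (by omega) (by omega) (by omega) h1
        omega
      · have := cycle_getVert_inj hw (by omega) (by omega) (by omega) (by omega) h1
        omega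

end S15
open CMCodim2 MvPolynomial S15 in
/-- Let `G` be the Taylor graph of a Cohen–Macaulay monomial ideal of
codimension 2 with a linear resolution. Then `G` is a chordal graph, and any two
distinct maximal cliques of `G` have at most one vertex in common. -/
theorem statement15 (K : Type*) [Field K] {n m : ℕ}
    (d : Fin (m + 1) → (Fin n →₀ ℕ)) (I : Ideal (MvPolynomial (Fin n) K))
    (hgen : MinGens K m d I) (hcm : IsCMCodim2 I) (hlin : HasLinearRes K m d)
    (G : SimpleGraph (Fin (m + 1))) (hG : G = taylorGraph K m d) :
    IsChordal G ∧
      ∀ s t : Set (Fin (m + 1)), IsMaxClique G s → IsMaxClique G t → s ≠ t →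
        (s ∩ t).Subsingleton := by
  subst hG
  obtain ⟨c, hc⟩ := hlin.1
  have hdinj : Function.Injective d := d_inj hgen
  constructor
  · -- chordality
    intro v w hw hlen4
    classical
    have hadj01 : (taylorGraph K m d).Adj (w.getVert 0) (w.getVert 1) :=
      w.adj_getVert_succ (by omega)
    obtain ⟨t, ht, hadj'⟩ := taylorGraph_adj_iff.mp hadj01
    rw [relGraph_adj] at hadj'
    obtain ⟨hne01, horient⟩ := hadj'
    obtain ⟨k₀, hk₀⟩ : ∃ k₀, t k₀ = (w.getVert 0, w.getVert 1) ∨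
        t k₀ = (w.getVert 1, w.getVert 0) := by
      rcases horient with ⟨k₀, h⟩ | ⟨k₀, h⟩
      exacts [⟨k₀, Or.inl h⟩, ⟨k₀, Or.inr h⟩]
    have hL : lsup d (t k₀).1 (t k₀).2 = lsup d (w.getVert 0) (w.getVert 1) := by
      rcases hk₀ with h | h
      · rw [h]
      · rw [h]; exact lsup_comm _ _
    have hDdeg : mdeg (lsup d (w.getVert 0) (w.getVert 1)) = c + 1 :=
      edge_mdeg hlin hc hadj01
    have hg1nr : ¬ (exGraph t k₀).Reachable (w.getVert 0) (w.getVert 1) := by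
      rcases hk₀ with h | h
      · have hb := bridge ht k₀; rw [h] at hb; exact hb
      · have hb := bridge ht k₀; rw [h] at hb; exact fun hr => hb hr.symm
    have hbound : ∀ x y : Fin (m+1),
        (exGraph t k₀).Reachable (w.getVert 0) x →
        ¬ (exGraph t k₀).Reachable (w.getVert 0) y →
        (taylorGraph K m d).Adj x y →
        d x ≤ lsup d (w.getVert 0) (w.getVert 1) ∧
          d y ≤ lsup d (w.getVert 0) (w.getVert 1) := by
      intro x y hx hy hadj
      have hsep : ¬ (exGraph t k₀).Reachable x y := fun hr => hy (hx.trans hr)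
      have hdiv := key_div ht k₀ hsep
      rw [hL] at hdiv
      have hxy_deg : mdeg (lsup d x y) = c + 1 := edge_mdeg hlin hc hadj
      have heq : lsup d (w.getVert 0) (w.getVert 1) = lsup d x y :=
        eq_of_le_of_mdeg_le hdiv (by rw [hDdeg, hxy_deg])
      exact ⟨by rw [heq]; exact le_lsup_left (d := d) x y,
        by rw [heq]; exact le_lsup_right (d := d) x y⟩
    -- the common "produce the chord" step
    have final : ∀ ia ib : ℕ, ia < ib → ib ≤ w.length - 1 → ia + 2 ≤ ib →
        ¬(ia = 0 ∧ ib = w.length - 1) →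
        d (w.getVert ia) ≤ lsup d (w.getVert 0) (w.getVert 1) →
        d (w.getVert ib) ≤ lsup d (w.getVert 0) (w.getVert 1) →
        ∃ a b, a ∈ w.support ∧ b ∈ w.support ∧ (taylorGraph K m d).Adj a b ∧
          s(a, b) ∉ w.edges := by
      intro ia ib h1 h2 h3 h4 h5 h6
      have hk3 := hw.three_le_length
      have hne : w.getVert ia ≠ w.getVert ib := by
        intro hEq
        rcases Nat.eq_zero_or_pos ia with h0 | hpos
        · subst h0
          rw [show w.getVert 0 = w.getVert w.length by
            rw [SimpleGraph.Walk.getVert_zero, SimpleGraph.Walk.getVert_length]] at hEq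
          have := cycle_getVert_inj hw (by omega) (le_refl _) (by omega) (by omega) hEq
          omega
        · have := cycle_getVert_inj hw (by omega) (by omega) (by omega) (by omega) hEq
          omega
      exact ⟨w.getVert ia, w.getVert ib,
        getVert_mem_support w (by omega), getVert_mem_support w (by omega),
        key_adj hlin hdinj hc ht hne h5 h6 hDdeg.le,
        chord_not_edge hw h1 h2 h3 h4⟩
    -- find the first index after which we return to the component of `getVert 0`
    have hQex : ∃ s', (exGraph t k₀).Reachable (w.getVert 0) (w.getVert (s'+1)) := by
      refine ⟨w.length - 1, ?_⟩
      rw [show w.length - 1 + 1 = w.length by omega, SimpleGraph.Walk.getVert_length,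
        SimpleGraph.Walk.getVert_zero]
    set s := Nat.find hQex with hs_def
    have hQs : (exGraph t k₀).Reachable (w.getVert 0) (w.getVert (s+1)) :=
      Nat.find_spec hQex
    have hs_le : s ≤ w.length - 1 := Nat.find_min' hQex (by
      rw [show w.length - 1 + 1 = w.length by omega, SimpleGraph.Walk.getVert_length,
        SimpleGraph.Walk.getVert_zero])
    have hs_pos : 1 ≤ s := by
      rcases Nat.eq_zero_or_pos s with h0 | h
      · exfalso
        apply hg1nr
        have := hQs
        rw [h0] at this
        exact this
      · exact h
    have hnr_s : ¬ (exGraph t k₀).Reachable (w.getVert 0) (w.getVert s) := by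
      have := Nat.find_min hQex (show s - 1 < s by omega)
      rw [show s - 1 + 1 = s by omega] at this
      exact this
    have hadj_s : (taylorGraph K m d).Adj (w.getVert s) (w.getVert (s+1)) :=
      w.adj_getVert_succ (by omega)
    obtain ⟨hd_s1, hd_s⟩ := hbound (w.getVert (s+1)) (w.getVert s) hQs hnr_s hadj_s.symm
    rcases Nat.lt_or_ge s 2 with hs2 | hs2
    · -- s = 1 : use the chord {getVert 0, getVert 2}
      have hs1 : s = 1 := by omega
      refine final 0 2 (by omega) (by omega) (by omega) (by omega)
        (le_lsup_left (d := d) _ _) ?_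
      rw [hs1] at hd_s1
      exact hd_s1
    · rcases Nat.lt_or_ge s (w.length - 1) with hs' | hs'
      · -- 2 ≤ s ≤ length - 2 : use the chord {getVert 0, getVert s}
        exact final 0 s (by omega) (by omega) (by omega) (by omega)
          (le_lsup_left (d := d) _ _) hd_s
      · -- s = length - 1 : use the chord {getVert 1, getVert (length - 1)}
        have hseq : s = w.length - 1 := by omega
        refine final 1 (w.length - 1) (by omega) (by omega) (by omega) (by omega)
          (le_lsup_right (d := d) _ _) ?_
        rw [hseq] at hd_s
        exact hd_s
  · -- maximal cliques intersect in at most one vertex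
    intro s t hs ht' hst
    intro a ha b hb
    by_contra hab
    have hadj : (taylorGraph K m d).Adj a b := hs.1 ha.1 hb.1 hab
    obtain ⟨t₀, ht₀, hadj'⟩ := taylorGraph_adj_iff.mp hadj
    rw [relGraph_adj] at hadj'
    obtain ⟨hneab, horient⟩ := hadj'
    obtain ⟨k₀, hk₀⟩ : ∃ k₀, t₀ k₀ = (a, b) ∨ t₀ k₀ = (b, a) := by
      rcases horient with ⟨k₀, h⟩ | ⟨k₀, h⟩
      exacts [⟨k₀, Or.inl h⟩, ⟨k₀, Or.inr h⟩]
    have hL : lsup d (t₀ k₀).1 (t₀ k₀).2 = lsup d a b := by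
      rcases hk₀ with h | h
      · rw [h]
      · rw [h]; exact lsup_comm _ _
    have hDdeg : mdeg (lsup d a b) = c + 1 := edge_mdeg hlin hc hadj
    have hbnr : ¬ (exGraph t₀ k₀).Reachable a b := by
      rcases hk₀ with h | h
      · have hbr := bridge ht₀ k₀; rw [h] at hbr; exact hbr
      · have hbr := bridge ht₀ k₀; rw [h] at hbr; exact fun hr => hbr hr.symm
    have hbound : ∀ x : Fin (m+1), (taylorGraph K m d).Adj x a →
        (taylorGraph K m d).Adj x b → d x ≤ lsup d a b := by
      intro x hxa hxb
      by_cases hx : (exGraph t₀ k₀).Reachable a x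
      · have hsep : ¬ (exGraph t₀ k₀).Reachable x b := fun h => hbnr (hx.trans h)
        have hdiv := key_div ht₀ k₀ hsep
        rw [hL] at hdiv
        have hdeg2 : mdeg (lsup d x b) = c + 1 := edge_mdeg hlin hc hxb
        have heq : lsup d a b = lsup d x b :=
          eq_of_le_of_mdeg_le hdiv (by rw [hDdeg, hdeg2])
        rw [heq]
        exact le_lsup_left (d := d) x b
      · have hsep : ¬ (exGraph t₀ k₀).Reachable x a := fun h => hx h.symm
        have hdiv := key_div ht₀ k₀ hsep
        rw [hL] at hdiv
        have hdeg2 : mdeg (lsup d x a) = c + 1 := edge_mdeg hlin hc hxa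
        have heq : lsup d a b = lsup d x a :=
          eq_of_le_of_mdeg_le hdiv (by rw [hDdeg, hdeg2])
        rw [heq]
        exact le_lsup_left (d := d) x a
    have hall : ∀ x ∈ s ∪ t, d x ≤ lsup d a b := by
      intro x hx
      by_cases hxa : x = a
      · subst hxa; exact le_lsup_left (d := d) x b
      by_cases hxb : x = b
      · subst hxb; exact le_lsup_right (d := d) a x
      have h1 : (taylorGraph K m d).Adj x a := by
        rcases hx with hx | hx
        · exact hs.1 hx ha.1 hxa
        · exact ht'.1 hx ha.2 hxa
      have h2 : (taylorGraph K m d).Adj x b := by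
        rcases hx with hx | hx
        · exact hs.1 hx hb.1 hxb
        · exact ht'.1 hx hb.2 hxb
      exact hbound x h1 h2
    have hclique : (taylorGraph K m d).IsClique (s ∪ t) := by
      intro x hx y hy hxy
      exact key_adj hlin hdinj hc ht₀ hxy (hall x hx) (hall y hy) hDdeg.le
    have h1 := hs.2 (s ∪ t) hclique Set.subset_union_left
    have h2 := ht'.2 (s ∪ t) hclique Set.subset_union_right
    exact hst (h1.symm.trans h2)
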